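/- arXiv:1905.07827 — 3 statements merged into one kernel-verified Lean document; each statement's English description precedes it below -/
import Mathlib

section
/- Let A(T) be the expected value of max(X, T - X) minus T/2, where X is a binomial random variable with parameters T and 1/2. Then for every positive integer T, A(2T-1) = (2T-1)! / (2^{2T-1} * ((T-1)!)^2). -/
open Finset

/-- `A T` is the expected value of `max(X, T - X)` minus `T/2`, where
`X ~ Binomial(T, 1/2)`. -/
noncomputable def A (T : ℕ) : ℝ :=
  (∑ k ∈ Finset.range (T + 1), (T.choose k : ℝ) / 2 ^ T * max (k : ℝ) ((T : ℝ) - k))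
    - (T : ℝ) / 2

lemma half_sum_choose (m : ℕ) :
    2 * ∑ i ∈ Finset.range (m + 1), (2 * m).choose (m + i)
      = 4 ^ m + (2 * m).choose m := by
  have hrefl : ∑ i ∈ Finset.range m, (2 * m).choose (m + 1 + i)
      = ∑ i ∈ Finset.range m, (2 * m).choose i := by
    rw [← Finset.sum_range_reflect (fun i => (2 * m).choose (m + 1 + i)) m]
    refine Finset.sum_congr rfl fun j hj => ?_
    have hj' : j < m := Finset.mem_range.mp hj
    have h1 : m + 1 + (m - 1 - j) = 2 * m - j := by omega
    rw [h1]
    exact Nat.choose_symm (by omega)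
  have htot : ∑ k ∈ Finset.range (2 * m + 1), (2 * m).choose k = 4 ^ m := by
    rw [Nat.sum_range_choose]
    rw [show (4 : ℕ) = 2 ^ 2 by norm_num, ← pow_mul]
  have hsplit : ∑ k ∈ Finset.range (2 * m + 1), (2 * m).choose k
      = ∑ i ∈ Finset.range m, (2 * m).choose i
        + ∑ i ∈ Finset.range (m + 1), (2 * m).choose (m + i) := by
    rw [show 2 * m + 1 = m + (m + 1) by ring, Finset.sum_range_add]
  have hshift : ∑ i ∈ Finset.range (m + 1), (2 * m).choose (m + i)
      = (2 * m).choose m + ∑ i ∈ Finset.range m, (2 * m).choose (m + 1 + i) := by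
    rw [Finset.sum_range_succ']
    simp [add_comm]
    refine Finset.sum_congr rfl fun j _ => ?_
    congr 1
    omega
  omega

lemma key_sum (m : ℕ) :
    ∑ k ∈ Finset.range (2 * m + 2), (2 * m + 1).choose k * max k (2 * m + 1 - k)
      = (2 * m + 1) * (4 ^ m + (2 * m).choose m) := by
  rw [show 2 * m + 2 = (m + 1) + (m + 1) by ring, Finset.sum_range_add]
  have h1 : ∑ k ∈ Finset.range (m + 1), (2 * m + 1).choose k * max k (2 * m + 1 - k)
      = ∑ i ∈ Finset.range (m + 1), (2 * m + 1).choose (m + 1 + i) * (m + 1 + i) := by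
    rw [← Finset.sum_range_reflect
      (fun i => (2 * m + 1).choose (m + 1 + i) * (m + 1 + i)) (m + 1)]
    refine Finset.sum_congr rfl fun j hj => ?_
    have hj' : j < m + 1 := Finset.mem_range.mp hj
    have h2 : m + 1 + (m + 1 - 1 - j) = 2 * m + 1 - j := by omega
    rw [h2]
    have h3 : max j (2 * m + 1 - j) = 2 * m + 1 - j := by
      apply max_eq_right; omega
    rw [h3]
    congr 1
    have := Nat.choose_symm (n := 2 * m + 1) (k := j) (by omega)
    omega
  have h4 : ∑ i ∈ Finset.range (m + 1),
      (2 * m + 1).choose (m + 1 + i) * max (m + 1 + i) (2 * m + 1 - (m + 1 + i))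
      = ∑ i ∈ Finset.range (m + 1), (2 * m + 1).choose (m + 1 + i) * (m + 1 + i) := by
    refine Finset.sum_congr rfl fun j hj => ?_
    have hj' : j < m + 1 := Finset.mem_range.mp hj
    congr 1
    apply max_eq_left; omega
  rw [h1, h4, ← two_mul]
  have h5 : ∑ i ∈ Finset.range (m + 1), (2 * m + 1).choose (m + 1 + i) * (m + 1 + i)
      = (2 * m + 1) * ∑ i ∈ Finset.range (m + 1), (2 * m).choose (m + i) := by
    rw [Finset.mul_sum]
    refine Finset.sum_congr rfl fun j _ => ?_
    have h := Nat.add_one_mul_choose_eq (2 * m) (m + j)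
    have he : m + 1 + j = (m + j) + 1 := by omega
    rw [he]
    omega
  rw [h5, ← mul_assoc, mul_comm 2 (2 * m + 1), mul_assoc, half_sum_choose]

theorem stmt_0 (T : ℕ) (hT : 1 ≤ T) :
    A (2 * T - 1) =
      (Nat.factorial (2 * T - 1) : ℝ) /
        (2 ^ (2 * T - 1) * ((Nat.factorial (T - 1) : ℝ)) ^ 2) := by
  obtain ⟨m, rfl⟩ : ∃ m, T = m + 1 := ⟨T - 1, by omega⟩
  have hn : 2 * (m + 1) - 1 = 2 * m + 1 := by omega
  have hm : m + 1 - 1 = m := by omega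
  rw [hn, hm]
  unfold A
  -- rewrite the real sum via the nat sum
  have hcast : ∀ k ∈ Finset.range (2 * m + 1 + 1),
      ((2 * m + 1).choose k : ℝ) / 2 ^ (2 * m + 1) * max (k : ℝ) (((2 * m + 1 : ℕ) : ℝ) - k)
      = (((2 * m + 1).choose k * max k (2 * m + 1 - k) : ℕ) : ℝ) / 2 ^ (2 * m + 1) := by
    intro k hk
    have hk' : k ≤ 2 * m + 1 := by
      have := Finset.mem_range.mp hk; omega
    push_cast [Nat.cast_sub hk']
    ring
  rw [Finset.sum_congr rfl hcast, ← Finset.sum_div, ← Nat.cast_sum,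
    show 2 * m + 1 + 1 = 2 * m + 2 by ring, key_sum]
  have hfact : ((2 * m + 1).factorial : ℝ)
      = (2 * m + 1) * ((2 * m).choose m * (m.factorial) ^ 2) := by
    have h := Nat.choose_mul_factorial_mul_factorial (n := 2 * m) (k := m) (by omega)
    have h2 : 2 * m - m = m := by omega
    rw [h2] at h
    have h3 : (2 * m + 1).factorial = (2 * m + 1) * (2 * m).factorial :=
      Nat.factorial_succ (2 * m)
    rw [h3, ← h]
    push_cast
    ring
  rw [hfact]
  have hfm : (0 : ℝ) < m.factorial := by positivity
  have h2p : (0 : ℝ) < 2 ^ (2 * m + 1) := by positivity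
  have h4 : (4 : ℝ) ^ m = 2 ^ (2 * m) := by
    rw [show (4 : ℝ) = 2 ^ 2 by norm_num, ← pow_mul]
  push_cast [h4]
  field_simp
  ring
end

section
/- With A(T) := E[max(X_T, T - X_T)] - T/2 for X_T ~ Binomial(T, 1/2), the sequence A satisfies the recurrence A(T) = A(T-1)/(T-1) + A(T-2) for all T ≥ 3, with A(1) = 1/2 and A(2) = 1/2. -/
/-! Pascal's rule turns `S n := maxSum n` into `S (n + 1) = 2 S n + 2 ^ n + [n even] C(n, n/2)`,
because `max k (n + 1 - k) + max (k + 1) (n - k) = 2 max k (n - k) + 1`, plus one more at the tie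
`2k = n`. Dividing by `2 ^ (n + 1)`, `A` increases only after even times:
`A (2m + 1) = A (2m) + C(2m, m) / 2 ^ (2m + 1)` and `A (2m + 2) = A (2m + 1)`. This gives
`A (2m) = m C(2m, m) / 4 ^ m`, hence `2m A (2m + 1) = (2m + 1) A (2m)`, and together with
`A (2m + 2) = A (2m + 1)` this is the recurrence at both parities. -/

open Finset

def maxSum (n : ℕ) : ℕ := ∑ k ∈ range (n + 1), n.choose k * max k (n - k)

lemma sum_range_choose_ite_two_mul_eq (n : ℕ) :
    ∑ k ∈ range (n + 1), (if 2 * k = n then n.choose k else 0) =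
      if Even n then n.choose (n / 2) else 0 := by
  rw [sum_ite, sum_const_zero, add_zero]
  split_ifs with hn
  · obtain ⟨m, rfl⟩ := hn
    have hm : m ∈ {k ∈ range (m + m + 1) | 2 * k = m + m} := by
      simp only [mem_filter, mem_range]; omega
    rw [sum_eq_single_of_mem m hm fun k hk _ => by simp only [mem_filter] at hk; omega]
    congr 1; omega
  · refine sum_eq_zero fun k hk => absurd ⟨k, ?_⟩ hn
    simp only [mem_filter] at hk; omega

lemma maxSum_succ (n : ℕ) :
    maxSum (n + 1) = 2 * maxSum n + 2 ^ n + if Even n then n.choose (n / 2) else 0 := by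
  have hmax : ∀ k ∈ range (n + 1), max k (n + 1 - k) + max (k + 1) (n - k) =
      2 * max k (n - k) + 1 + if 2 * k = n then 1 else 0 := by
    intro k hk
    simp only [mem_range] at hk
    split_ifs <;> omega
  calc maxSum (n + 1)
      = ∑ k ∈ range (n + 1), n.choose k * (max k (n + 1 - k) + max (k + 1) (n - k)) := by
        have pascal := sum_choose_succ_mul (R := ℕ) (fun i j => max i j) n
        simp only [Nat.cast_id] at pascal
        rw [maxSum, pascal, ← sum_add_distrib]
        simp only [mul_add]
    _ = ∑ k ∈ range (n + 1),
          (2 * (n.choose k * max k (n - k)) + n.choose k + if 2 * k = n then n.choose k else 0) := by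
        refine sum_congr rfl fun k hk => ?_
        rw [hmax k hk]
        split_ifs <;> ring
    _ = 2 * maxSum n + 2 ^ n + if Even n then n.choose (n / 2) else 0 := by
        rw [sum_add_distrib, sum_add_distrib, ← mul_sum, Nat.sum_range_choose,
          sum_range_choose_ite_two_mul_eq, maxSum]

lemma A_eq_maxSum (n : ℕ) : A n = maxSum n / 2 ^ n - n / 2 := by
  rw [A, maxSum, Nat.cast_sum, sum_div]
  congr 1
  refine sum_congr rfl fun k hk => ?_
  rw [Nat.cast_mul, Nat.cast_max, Nat.cast_sub (by simpa [Nat.lt_succ_iff] using hk)]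
  ring

lemma A_succ (n : ℕ) :
    A (n + 1) = A n + (if Even n then n.choose (n / 2) else 0 : ℕ) / 2 ^ (n + 1) := by
  rw [A_eq_maxSum, A_eq_maxSum, maxSum_succ]
  push_cast
  field_simp
  ring

lemma A_two_mul_add_two (m : ℕ) : A (2 * m + 2) = A (2 * m + 1) := by
  rw [A_succ, if_neg (by simp [parity_simps]), Nat.cast_zero, zero_div, add_zero]

lemma A_two_mul_add_one (m : ℕ) :
    A (2 * m + 1) = A (2 * m) + m.centralBinom / (2 * 4 ^ m) := by
  rw [A_succ, if_pos (even_two_mul m), Nat.mul_div_cancel_left m two_pos, pow_succ, pow_mul]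
  norm_num [Nat.centralBinom, mul_comm]

lemma A_two_mul (m : ℕ) : A (2 * m) = m * m.centralBinom / 4 ^ m := by
  induction m with
  | zero => simp [A]
  | succ m ih =>
    have hb : ((m + 1 : ℕ) : ℝ) * (m + 1).centralBinom = 2 * (2 * m + 1) * m.centralBinom := by
      exact_mod_cast m.succ_mul_centralBinom_succ
    rw [mul_add_one, A_two_mul_add_two, A_two_mul_add_one, ih, hb, pow_succ]
    field_simp
    ring

lemma two_mul_mul_A_two_mul_add_one (m : ℕ) :
    2 * m * A (2 * m + 1) = (2 * m + 1) * A (2 * m) := by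
  rw [A_two_mul_add_one, A_two_mul]
  field_simp

lemma A_add_two (n : ℕ) : A (n + 2) = A (n + 1) / (n + 1) + A n := by
  obtain ⟨m, rfl | rfl⟩ := n.even_or_odd'
  · have h := two_mul_mul_A_two_mul_add_one m
    rw [A_two_mul_add_two]
    push_cast
    field_simp
    linarith
  · have h := two_mul_mul_A_two_mul_add_one (m + 1)
    rw [show 2 * (m + 1) = 2 * m + 2 by ring, A_two_mul_add_two] at h
    rw [show 2 * m + 1 + 2 = 2 * m + 2 + 1 by ring, show 2 * m + 1 + 1 = 2 * m + 2 by ring,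
      A_two_mul_add_two]
    push_cast at h ⊢
    field_simp
    linarith

theorem stmt_1 :
    (∀ T : ℕ, 3 ≤ T → A T = A (T - 1) / ((T : ℝ) - 1) + A (T - 2)) ∧
      A 1 = 1 / 2 ∧ A 2 = 1 / 2 := by
  have hA1 : A 1 = 1 / 2 := by simpa [A] using A_two_mul_add_one 0
  refine ⟨fun T hT => ?_, hA1, by simpa [hA1] using A_two_mul_add_two 0⟩
  obtain ⟨n, rfl⟩ := Nat.exists_eq_add_of_le' (show 2 ≤ T by omega)
  rw [A_add_two, Nat.add_sub_cancel, show n + 2 - 1 = n + 1 by omega]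
  push_cast
  ring
end

section
/- The sequence b(m) = m * C(2m-1, m) / 2^{2m-1} is strictly increasing in m. -/
/-- `b m = m * C(2m-1, m) / 2^{2m-1}`, the mean absolute deviation of
`Binomial(2m-1, 1/2)`. -/
def b (m : ℕ) : ℚ :=
  (m : ℚ) * (((2 * m - 1).choose m : ℚ)) / 2 ^ (2 * m - 1)

theorem stmt_8 : ∀ m : ℕ, 1 ≤ m → b m < b (m + 1) := by
  intro m hm
  obtain ⟨k, rfl⟩ : ∃ k, m = k + 1 := ⟨m - 1, by omega⟩
  have h1 : 2 * (k + 1) - 1 = 2 * k + 1 := by omega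
  have h2 : 2 * (k + 1 + 1) - 1 = 2 * k + 3 := by omega
  have hsym : (2 * k + 1).choose k = (2 * k + 1).choose (k + 1) := by
    have h := Nat.choose_symm (show k ≤ 2 * k + 1 by omega)
    have he : 2 * k + 1 - k = k + 1 := by omega
    rw [he] at h
    exact h.symm
  have hpascal : (2 * k + 2).choose (k + 1) = 2 * (2 * k + 1).choose (k + 1) := by
    have h : (2 * k + 2).choose (k + 1)
        = (2 * k + 1).choose k + (2 * k + 1).choose (k + 1) :=
      Nat.choose_succ_succ (2 * k + 1) k
    omega
  have hkey : (k + 2) * (2 * k + 3).choose (k + 1 + 1)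
      = (2 * k + 3) * (2 * (2 * k + 1).choose (k + 1)) := by
    have h : (2 * k + 3) * (2 * k + 2).choose (k + 1)
        = (2 * k + 3).choose (k + 2) * (k + 2) :=
      Nat.add_one_mul_choose_eq (2 * k + 2) (k + 1)
    rw [hpascal] at h
    calc (k + 2) * (2 * k + 3).choose (k + 1 + 1)
        = (2 * k + 3).choose (k + 2) * (k + 2) := by ring_nf
      _ = (2 * k + 3) * (2 * (2 * k + 1).choose (k + 1)) := h.symm
  set c : ℚ := ((2 * k + 1).choose (k + 1) : ℚ) with hcdef
  set C : ℚ := ((2 * k + 3).choose (k + 1 + 1) : ℚ) with hCdef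
  have hcpos : 0 < c := by
    rw [hcdef]
    exact_mod_cast Nat.choose_pos (show k + 1 ≤ 2 * k + 1 by omega)
  have hkeyQ : ((k : ℚ) + 2) * C = (2 * (k : ℚ) + 3) * (2 * c) := by
    rw [hcdef, hCdef]
    exact_mod_cast congrArg (Nat.cast : ℕ → ℚ) hkey
  have hP : (0 : ℚ) < 2 ^ (2 * k + 1) := by positivity
  have hpow : (2 : ℚ) ^ (2 * k + 3) = 4 * 2 ^ (2 * k + 1) := by
    rw [show 2 * k + 3 = 2 * k + 1 + 2 by omega, pow_add]; ring
  simp only [b, h1, h2]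
  rw [div_lt_div_iff₀ (by positivity) (by positivity)]
  push_cast
  calc ((k : ℚ) + 1) * c * 2 ^ (2 * k + 3)
      = (4 * k + 4) * (c * 2 ^ (2 * k + 1)) := by rw [hpow]; ring
    _ < (4 * k + 6) * (c * 2 ^ (2 * k + 1)) := by
        have := mul_pos hcpos hP
        nlinarith
    _ = ((k : ℚ) + 1 + 1) * C * 2 ^ (2 * k + 1) := by
        linear_combination (2 : ℚ) ^ (2 * k + 1) * hkeyQ.symm
end
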